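/- There are no points with bounded forward orbit whose entire forward orbit stays in the region where all coordinates exceed one in modulus, on any surface of positive invariant: if p ∈ ℝ³ satisfies I(p) > 0 and for every k ∈ ℕ all three coordinates of Tᵏ(p) are greater than 1 in absolute value, then the forward orbit {Tⁿ(p) : n ≥ 0} is unbounded. -/

import Mathlib

/-- The Fibonacci trace map. -/
noncomputable def traceMap : ℝ × ℝ × ℝ → ℝ × ℝ × ℝ :=
  fun p => (2 * p.1 * p.2.1 - p.2.2, p.1, p.2.1)

/-- The Fricke–Vogt invariant. -/
noncomputable def frickeVogt : ℝ × ℝ × ℝ → ℝ :=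
  fun p => p.1 ^ 2 + p.2.1 ^ 2 + p.2.2 ^ 2 - 2 * p.1 * p.2.1 * p.2.2 - 1

/-!
Write the orbit as the consecutive triples `(a (n + 2), a (n + 1), a n)` of a sequence with
`a (n + 3) = 2 a (n + 2) a (n + 1) - a n`. If `|a n| ≤ |a (n + 1)| |a (n + 2)|` holds at some `n`,
it holds from then on and `|a|` grows geometrically. Otherwise each `a n` is the root of larger
modulus of `t ↦ I (a (n + 2), a (n + 1), t)`, whose two roots differ from their mean
`a (n + 2) a (n + 1)` by at least `√I`; so `|a n| ≥ |a (n + 2)| + √I`, which contradicts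
`|a n| > 1` after finitely many steps.
-/

open Filter

lemma frickeVogt_traceMap (p : ℝ × ℝ × ℝ) : frickeVogt (traceMap p) = frickeVogt p := by
  simp only [traceMap, frickeVogt]
  ring

lemma frickeVogt_iterate_traceMap (n : ℕ) (p : ℝ × ℝ × ℝ) :
    frickeVogt (traceMap^[n] p) = frickeVogt p :=
  congrFun (Function.iterate_invariant (g := frickeVogt) (funext frickeVogt_traceMap) n) p

noncomputable def traceSeq (p : ℝ × ℝ × ℝ) (n : ℕ) : ℝ := (traceMap^[n] p).2.2

lemma iterate_traceMap_eq (p : ℝ × ℝ × ℝ) (n : ℕ) :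
    traceMap^[n] p = (traceSeq p (n + 2), traceSeq p (n + 1), traceSeq p n) := by
  simp only [traceSeq, Function.iterate_succ_apply', traceMap]

lemma traceSeq_add_three (p : ℝ × ℝ × ℝ) (n : ℕ) :
    traceSeq p (n + 3) = 2 * traceSeq p (n + 2) * traceSeq p (n + 1) - traceSeq p n := by
  conv_lhs => rw [traceSeq, Function.iterate_succ_apply', Function.iterate_succ_apply',
    Function.iterate_succ_apply', iterate_traceMap_eq]
  rfl

lemma abs_mul_le_abs_two_mul_mul_sub {x y z : ℝ} (h : |z| ≤ |x * y|) :
    |x * y| ≤ |2 * x * y - z| :=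
  calc |x * y| = |2 * (x * y)| - |x * y| := by rw [abs_mul 2, abs_two]; ring
    _ ≤ |2 * (x * y)| - |z| := by linarith
    _ ≤ |2 * x * y - z| := by rw [← mul_assoc]; exact abs_sub_abs_le_abs_sub _ _

/-- `z` and `2xy - z` are the roots `xy ± √((x² - 1)(y² - 1) + I)` of `t ↦ frickeVogt (x, y, t)`. -/
lemma abs_mul_add_sqrt_frickeVogt_le_abs {x y z : ℝ} (hx : 1 ≤ |x|) (hy : 1 ≤ |y|)
    (hw : |2 * x * y - z| < |x * y|) :
    |x * y| + √(frickeVogt (x, y, z)) ≤ |z| := by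
  set d := z - x * y
  have hd : d ^ 2 = (x ^ 2 - 1) * (y ^ 2 - 1) + frickeVogt (x, y, z) := by
    simp only [d, frickeVogt]; ring
  have hsqrt : √(frickeVogt (x, y, z)) ≤ |d| := by
    rw [← Real.sqrt_sq_eq_abs, hd]
    refine Real.sqrt_le_sqrt (le_add_of_nonneg_left (mul_nonneg ?_ ?_)) <;>
      nlinarith [sq_abs x, sq_abs y]
  have hsign : 0 ≤ x * y * d := by
    have : |x * y - d| < |x * y| := by rwa [show x * y - d = 2 * x * y - z by ring]
    nlinarith [sq_abs (x * y - d), sq_abs (x * y), abs_nonneg (x * y - d)]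
  have hz : |z| = |x * y| + |d| := by
    have hprod : |x * y| * |d| = x * y * d := by rw [← abs_mul, abs_of_nonneg hsign]
    rw [show z = x * y + d by ring, ← sq_eq_sq₀ (abs_nonneg _) (by positivity)]
    linear_combination sq_abs (x * y + d) - sq_abs (x * y) - sq_abs d - 2 * hprod
  linarith

lemma tendsto_atTop_of_mul_le {u : ℕ → ℝ} (hu : ∀ n, 1 < u n)
    (hmul : ∀ n, u n * u (n + 1) ≤ u (n + 2)) : Tendsto u atTop atTop := by
  set c := min (u 0) (u 1)
  have hc : 1 < c := lt_min (hu 0) (hu 1)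
  have hpow : ∀ n, c ≤ u n ∧ c ^ (n + 1) ≤ u (n + 1) := by
    intro n
    induction n with
    | zero => exact ⟨min_le_left _ _, (pow_one c).le.trans (min_le_right _ _)⟩
    | succ n ih =>
      refine ⟨(le_self_pow₀ hc.le n.succ_ne_zero).trans ih.2, ?_⟩
      calc c ^ (n + 2) = c * c ^ (n + 1) := pow_succ' c _
        _ ≤ u n * u (n + 1) := mul_le_mul ih.1 ih.2 (by positivity) (by linarith [hu n])
        _ ≤ u (n + 2) := hmul n
  refine (tendsto_add_atTop_iff_nat 1).mp (tendsto_atTop_mono (fun n => (hpow n).2) ?_)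
  exact (tendsto_pow_atTop_atTop_of_one_lt hc).comp (tendsto_add_atTop_nat 1)

section TraceRecurrence

variable {A : ℕ → ℝ}

lemma abs_mul_abs_le_abs_add_three (hrec : ∀ n, A (n + 3) = 2 * A (n + 2) * A (n + 1) - A n)
    {n : ℕ} (hn : |A n| ≤ |A (n + 1)| * |A (n + 2)|) :
    |A (n + 1)| * |A (n + 2)| ≤ |A (n + 3)| := by
  rw [← abs_mul, mul_comm, hrec]
  exact abs_mul_le_abs_two_mul_mul_sub (by rwa [abs_mul, mul_comm])

lemma tendsto_abs_atTop_of_abs_le_abs_mul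
    (hrec : ∀ n, A (n + 3) = 2 * A (n + 2) * A (n + 1) - A n)
    (habs : ∀ n, 1 < |A n|) (h₀ : |A 0| ≤ |A 1| * |A 2|) :
    Tendsto (fun n => |A n|) atTop atTop := by
  have hreg : ∀ n, |A n| ≤ |A (n + 1)| * |A (n + 2)| := fun n => by
    induction n with
    | zero => exact h₀
    | succ n ih =>
      have hgrow := abs_mul_abs_le_abs_add_three hrec ih
      nlinarith [habs (n + 1), habs (n + 2), habs (n + 3)]
  refine (tendsto_add_atTop_iff_nat 1).mp (tendsto_atTop_of_mul_le (fun n => habs _) fun n => ?_)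
  exact abs_mul_abs_le_abs_add_three hrec (hreg n)

lemma exists_abs_le_abs_mul (hrec : ∀ n, A (n + 3) = 2 * A (n + 2) * A (n + 1) - A n)
    (habs : ∀ n, 1 < |A n|) {J : ℝ} (hJ : 0 < J)
    (hinv : ∀ n, frickeVogt (A (n + 2), A (n + 1), A n) = J) :
    ∃ n, |A n| ≤ |A (n + 1)| * |A (n + 2)| := by
  by_contra! hdec
  have hstep : ∀ n, |A (n + 2)| + √J ≤ |A n| := fun n => by
    have hw : |2 * A (n + 2) * A (n + 1) - A n| < |A (n + 2) * A (n + 1)| := by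
      rw [← hrec, abs_mul]
      calc |A (n + 3)| < |A (n + 2)| * |A (n + 3)| :=
            lt_mul_left (by linarith [habs (n + 3)]) (habs _)
        _ < |A (n + 1)| := hdec (n + 1)
        _ < |A (n + 2)| * |A (n + 1)| := lt_mul_left (by linarith [habs (n + 1)]) (habs _)
    have hgap := abs_mul_add_sqrt_frickeVogt_le_abs (habs _).le (habs _).le hw
    rw [hinv, abs_mul] at hgap
    nlinarith [habs (n + 1), habs (n + 2)]
  have hdrop : ∀ k : ℕ, |A (2 * k)| + k * √J ≤ |A 0| := fun k => by
    induction k with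
    | zero => simp
    | succ k ih => rw [Nat.mul_succ]; push_cast; linarith [hstep (2 * k)]
  obtain ⟨k, hk⟩ := exists_nat_gt (|A 0| / √J)
  rw [div_lt_iff₀ (Real.sqrt_pos.mpr hJ)] at hk
  linarith [hdrop k, habs (2 * k)]

lemma tendsto_abs_atTop_of_frickeVogt_pos
    (hrec : ∀ n, A (n + 3) = 2 * A (n + 2) * A (n + 1) - A n)
    (habs : ∀ n, 1 < |A n|) {J : ℝ} (hJ : 0 < J)
    (hinv : ∀ n, frickeVogt (A (n + 2), A (n + 1), A n) = J) :
    Tendsto (fun n => |A n|) atTop atTop := by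
  obtain ⟨m, hm⟩ := exists_abs_le_abs_mul hrec habs hJ hinv
  refine (tendsto_add_atTop_iff_nat m).mp ?_
  refine tendsto_abs_atTop_of_abs_le_abs_mul (A := fun n => A (n + m)) (fun n => ?_)
    (fun n => habs _) (by simpa only [zero_add, add_comm m] using hm)
  simpa only [add_right_comm _ m] using hrec (n + m)

end TraceRecurrence

theorem no_bounded_orbit_stays_outside_unit_cube
    (p : ℝ × ℝ × ℝ) (hI : 0 < frickeVogt p)
    (h : ∀ k : ℕ, 1 < |(traceMap^[k] p).1| ∧ 1 < |(traceMap^[k] p).2.1| ∧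
      1 < |(traceMap^[k] p).2.2|) :
    ¬ Bornology.IsBounded (Set.range fun n : ℕ => traceMap^[n] p) := by
  intro hb
  have hinv (n : ℕ) : frickeVogt (traceSeq p (n + 2), traceSeq p (n + 1), traceSeq p n) =
      frickeVogt p := by
    rw [← iterate_traceMap_eq, frickeVogt_iterate_traceMap]
  have hlim := tendsto_abs_atTop_of_frickeVogt_pos (traceSeq_add_three p) (fun n => (h n).2.2)
    hI hinv
  obtain ⟨C, hC⟩ := isBounded_iff_forall_norm_le.mp hb
  obtain ⟨n, hn⟩ := (hlim.eventually_gt_atTop C).exists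
  have hle : |traceSeq p n| ≤ C :=
    calc |traceSeq p n| = ‖(traceMap^[n] p).2.2‖ := (Real.norm_eq_abs _).symm
      _ ≤ ‖traceMap^[n] p‖ := (norm_snd_le _).trans (norm_snd_le _)
      _ ≤ C := hC _ ⟨n, rfl⟩
  linarith
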